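/- arXiv:1801.05774 — 4 statements merged into one kernel-verified Lean document; each statement's English description precedes it below -/
import Mathlib

section
/- For quaternions u₁, u₂ over the reals, u₁ * conj(u₂) * u₁ = 2⟪u₁, u₂⟫ • u₁ - ⟪u₁, u₁⟫ • u₂, where ⟪·,·⟫ denotes the standard inner product on the quaternions viewed as ℝ⁴ and conj denotes quaternion conjugation. -/
noncomputable def qinner (u v : Quaternion ℝ) : ℝ := (u * star v).re

namespace Quaternion

variable {R : Type*} [CommRing R]

theorem mul_star_add_mul_star (u v : ℍ[R]) :
    u * star v + v * star u = ↑(2 * (u * star v).re) := by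
  simpa only [star_mul, star_star] using self_add_star' (u * star v)

theorem mul_star_mul_self (u v : ℍ[R]) :
    u * star v * u = (2 * (u * star v).re) • u - (u * star u).re • v :=
  calc u * star v * u = (↑(2 * (u * star v).re) - v * star u) * u := by
        rw [← mul_star_add_mul_star u v, add_sub_cancel_right]
    _ = (2 * (u * star v).re) • u - (u * star u).re • v := by
        rw [sub_mul, mul_assoc, star_mul_self, ← normSq_def, coe_mul_eq_smul, mul_coe_eq_smul]

end Quaternion

theorem stmt0 (u₁ u₂ : Quaternion ℝ) :
    u₁ * star u₂ * u₁ = (2 * qinner u₁ u₂) • u₁ - (qinner u₁ u₁) • u₂ :=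
  Quaternion.mul_star_mul_self u₁ u₂
end

section
/- For quaternions u₁, u₂, the squared norm of the anticommutator {u₁,u₂} = (u₁u₂+u₂u₁)/2 satisfies ⟪{u₁,u₂},{u₁,u₂}⟫ = ⟪u₁,u₁⟫⟪u₂,u₂⟫ - (⟪u₁',u₁'⟫⟪u₂',u₂'⟫ - ⟪u₁',u₂'⟫²), where u' = u - re(u)•1. -/
/-!
The anticommutator `(u₁u₂ + u₂u₁)/2` and the half-commutator `(u₁u₂ - u₂u₁)/2` are the half-sum
and half-difference of `u₁u₂` and `u₂u₁`, which both have squared norm `|u₁|²|u₂|²`; by the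
parallelogram law their squared norms add up to `|u₁|²|u₂|²`. The commutator only sees the
imaginary parts `p`, `q`, and since `star (p * q) = q * p` for pure quaternions, `(pq - qp)/2` is
the imaginary part of `pq` (the cross product `p × q`), whose squared norm is
`|p|²|q|² - ⟪p, q⟫²` because `re (p * q) = -⟪p, q⟫`.
-/

namespace Quaternion

variable {R : Type*} [CommRing R]

theorem sub_re_smul_one (a : ℍ[R]) : a - a.re • 1 = a.im := by
  ext <;> simp

theorem normSq_eq_re_sq_add_normSq_im (a : ℍ[R]) : normSq a = a.re ^ 2 + normSq a.im := by
  simp only [normSq_def', re_im, imI_im, imJ_im, imK_im]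
  ring

theorem self_sub_star (a : ℍ[R]) : a - star a = 2 * a.im := by
  ext <;> simp [two_mul]

theorem normSq_two : normSq (2 : ℍ[R]) = 4 := by
  rw [show (2 : ℍ[R]) = ((2 : R) : ℍ[R]) by norm_cast, normSq_coe]
  norm_num

theorem normSq_add_add_normSq_sub (a b : ℍ[R]) :
    normSq (a + b) + normSq (a - b) = 2 * (normSq a + normSq b) := by
  rw [sub_eq_add_neg, normSq_add, normSq_add, normSq_neg, star_neg, mul_neg, re_neg]
  ring

theorem mul_sub_mul_swap_eq_im (a b : ℍ[R]) : a * b - b * a = a.im * b.im - b.im * a.im := by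
  ext <;> simp <;> ring

theorem star_im_mul_im (a b : ℍ[R]) : star (a.im * b.im) = b.im * a.im := by
  rw [star_mul, star_im, star_im, neg_mul_neg]

theorem re_im_mul_im (a b : ℍ[R]) : (a.im * b.im).re = -(a.im * star b.im).re := by
  rw [star_im, mul_neg, re_neg, neg_neg]

theorem normSq_mul_sub_mul_swap (a b : ℍ[R]) :
    normSq (a * b - b * a) = 4 * (normSq a.im * normSq b.im - (a.im * star b.im).re ^ 2) := by
  have h := normSq_eq_re_sq_add_normSq_im (a.im * b.im)
  rw [map_mul, re_im_mul_im] at h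
  rw [mul_sub_mul_swap_eq_im, ← star_im_mul_im a b, self_sub_star, map_mul, normSq_two, h]
  ring

theorem normSq_mul_add_mul_swap_add_normSq_mul_sub_mul_swap (a b : ℍ[R]) :
    normSq (a * b + b * a) + normSq (a * b - b * a) = 4 * (normSq a * normSq b) := by
  rw [normSq_add_add_normSq_sub, map_mul, map_mul, mul_comm (normSq b)]
  ring

end Quaternion

open Quaternion

theorem qinner_self (u : ℍ[ℝ]) : qinner u u = normSq u := rfl

theorem stmt7 (u₁ u₂ : Quaternion ℝ) :
    qinner ((u₁ * u₂ + u₂ * u₁) / 2) ((u₁ * u₂ + u₂ * u₁) / 2) =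
      qinner u₁ u₁ * qinner u₂ u₂ -
        (qinner (u₁ - u₁.re • 1) (u₁ - u₁.re • 1) * qinner (u₂ - u₂.re • 1) (u₂ - u₂.re • 1)
          - (qinner (u₁ - u₁.re • 1) (u₂ - u₂.re • 1)) ^ 2) := by
  have h := normSq_mul_add_mul_swap_add_normSq_mul_sub_mul_swap u₁ u₂
  rw [normSq_mul_sub_mul_swap] at h
  simp only [qinner_self, sub_re_smul_one, normSq_div, normSq_two]
  unfold qinner
  linear_combination h / 4
end

section
/- For quaternions u₁, u₂, u₃, the triple commutator T(u₁,u₂,u₃) := ((u₁ * conj u₂) * u₃ - u₃ * (conj u₂ * u₁))/2 equals ⟪[u₁,u₂], u₃⟫ • 1 - re(u₁) • [u₂,u₃] + re(u₂) • [u₁,u₃] - re(u₃) • [u₁,u₂], where [a,b] = (ab - ba)/2 and re(u) = ⟪u,1⟫. -/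
open Quaternion

theorem Quaternion.mul_star_mul_sub_mul_star_mul {R : Type*} [CommRing R] (u₁ u₂ u₃ : ℍ[R]) :
    u₁ * star u₂ * u₃ - u₃ * (star u₂ * u₁) =
      ((u₁ * u₂ - u₂ * u₁) * star u₃).re • (1 : ℍ[R]) - u₁.re • (u₂ * u₃ - u₃ * u₂)
        + u₂.re • (u₁ * u₃ - u₃ * u₁) - u₃.re • (u₁ * u₂ - u₂ * u₁) := by
  ext <;> simp <;> ring

theorem div_two_eq_inv_two_smul {𝕜 A : Type*} [Field 𝕜] [DivisionRing A] [Algebra 𝕜 A] (x : A) :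
    x / 2 = (2⁻¹ : 𝕜) • x := by
  rw [div_eq_mul_inv, ← map_ofNat (algebraMap 𝕜 A) 2, ← map_inv₀, ← Algebra.commutes,
    ← Algebra.smul_def]

theorem qinner_one_right (u : ℍ[ℝ]) : qinner u 1 = u.re := by
  simp [qinner]

theorem stmt11 (u₁ u₂ u₃ : Quaternion ℝ) :
    ((u₁ * star u₂) * u₃ - u₃ * (star u₂ * u₁)) / 2 =
      (qinner ((u₁ * u₂ - u₂ * u₁) / 2) u₃) • (1 : Quaternion ℝ)
        - (qinner u₁ 1) • ((u₂ * u₃ - u₃ * u₂) / 2)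
        + (qinner u₂ 1) • ((u₁ * u₃ - u₃ * u₁) / 2)
        - (qinner u₃ 1) • ((u₁ * u₂ - u₂ * u₁) / 2) := by
  rw [qinner_one_right, qinner_one_right, qinner_one_right, qinner,
    mul_star_mul_sub_mul_star_mul]
  simp only [div_two_eq_inv_two_smul (𝕜 := ℝ), smul_mul_assoc, re_smul, smul_eq_mul]
  module
end

section
/- For quaternions u₁, u₂, u₃, the triple anticommutator A(u₁,u₂,u₃) = ⟪u₁,u₂⟫•u₃ - ⟪u₁,u₃⟫•u₂ + ⟪u₂,u₃⟫•u₁ and the triple commutator T(u₁,u₂,u₃) = ((u₁ * conj u₂)u₃ - u₃(conj u₂ * u₁))/2 are orthogonal: ⟪A(u₁,u₂,u₃), T(u₁,u₂,u₃)⟫ = 0. -/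
open Quaternion
open scoped RealInnerProductSpace

namespace Quaternion

theorem re_mul_comm (a b : ℍ) : (a * b).re = (b * a).re := by
  simp only [re_mul]
  ring

theorem div_two_eq_smul (a : ℍ) : a / 2 = (2⁻¹ : ℝ) • a := by
  rw [div_eq_mul_inv, ← mul_coe_eq_smul, coe_inv]
  rfl

theorem inner_self_mul (a b : ℍ) : ⟪a, a * b⟫ = normSq a * b.re := by
  rw [inner_def, star_mul, re_mul_comm, mul_assoc, star_mul_self, mul_coe_eq_smul, re_smul,
    re_star, smul_eq_mul]

theorem inner_mul_self (a b : ℍ) : ⟪a, b * a⟫ = normSq a * b.re := by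
  rw [inner_def, star_mul, ← mul_assoc, self_mul_star, coe_mul_eq_smul, re_smul,
    re_star, smul_eq_mul]

theorem mul_mul_self_eq (y z : ℍ) : y * z * y = (2 * (y * z).re) • y - normSq y • star z := by
  have hzy : z * y + star (z * y) = ((2 * (y * z).re : ℝ) : ℍ) := by
    rw [self_add_star', re_mul_comm]
  calc y * z * y = y * (z * y + star (z * y)) - y * star y * star z := by
        rw [star_mul, mul_add, mul_assoc, mul_assoc]; abel
    _ = _ := by rw [hzy, self_mul_star, mul_coe_eq_smul, coe_mul_eq_smul]

theorem inner_mul_star_mul (y a b : ℍ) :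
    ⟪y, a * star y * b⟫ = 2 * ⟪y, a⟫ * ⟪y, b⟫ - normSq y * ⟪a, b⟫ := by
  have h := congr_arg (fun q => (q * star a).re) (mul_mul_self_eq y (star b))
  simp only [re_sub, re_smul, smul_eq_mul, sub_mul, smul_mul_assoc, star_star] at h
  rw [inner_def, star_mul, star_mul, star_star, ← mul_assoc, ← mul_assoc, h, ← inner_def,
    ← inner_def, ← inner_def, real_inner_comm b a]
  ring

noncomputable def tripleCommutator (u₁ u₂ u₃ : ℍ) : ℍ :=
  (u₁ * star u₂ * u₃ - u₃ * (star u₂ * u₁)) / 2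

theorem inner_tripleCommutator (x u₁ u₂ u₃ : ℍ) :
    ⟪x, tripleCommutator u₁ u₂ u₃⟫ =
      2⁻¹ * (⟪x, u₁ * star u₂ * u₃⟫ - ⟪x, u₃ * (star u₂ * u₁)⟫) := by
  rw [tripleCommutator, div_two_eq_smul, real_inner_smul_right, inner_sub_right]

theorem inner_tripleCommutator_left (u₁ u₂ u₃ : ℍ) : ⟪u₁, tripleCommutator u₁ u₂ u₃⟫ = 0 := by
  rw [inner_tripleCommutator, mul_assoc, ← mul_assoc u₃, inner_self_mul, inner_mul_self,
    re_mul_comm, sub_self, mul_zero]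

theorem inner_tripleCommutator_middle (u₁ u₂ u₃ : ℍ) : ⟪u₂, tripleCommutator u₁ u₂ u₃⟫ = 0 := by
  rw [inner_tripleCommutator, ← mul_assoc, inner_mul_star_mul, inner_mul_star_mul,
    real_inner_comm u₁ u₃]
  ring

theorem inner_tripleCommutator_right (u₁ u₂ u₃ : ℍ) : ⟪u₃, tripleCommutator u₁ u₂ u₃⟫ = 0 := by
  rw [inner_tripleCommutator, inner_mul_self, inner_self_mul, re_mul_comm, sub_self, mul_zero]

end Quaternion

theorem qinner_eq_inner (u v : ℍ) : qinner u v = ⟪u, v⟫ := rfl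

theorem stmt13 (u₁ u₂ u₃ : Quaternion ℝ) :
    qinner ((qinner u₁ u₂) • u₃ - (qinner u₁ u₃) • u₂ + (qinner u₂ u₃) • u₁)
           (((u₁ * star u₂) * u₃ - u₃ * (star u₂ * u₁)) / 2) = 0 := by
  change qinner _ (tripleCommutator u₁ u₂ u₃) = 0
  simp only [qinner_eq_inner, inner_add_left, inner_sub_left, real_inner_smul_left,
    inner_tripleCommutator_left, inner_tripleCommutator_middle, inner_tripleCommutator_right,
    mul_zero, sub_zero, add_zero]
end
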